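/- For measurable A ⊆ ℝ^d, δ > 0, ε > 0 and t ≥ 1, the Minkowski sum Z_δ(ε)A + Q(0,(t-1)δ) is contained in Z_{tδ}(t^{-d}ε)A, where Z_δ(ε)A = {x ∈ ℝ^d : |Q(x,δ) ∩ A| > ε·|Q(x,δ)|} and Q(x,r) is the open axis-parallel cube of side r centered at x. -/
import Mathlib


open MeasureTheory Pointwise

noncomputable section

/-- Open axis-parallel cube of side length r centered at x in ℝ^d. -/
def cube (d : ℕ) (x : EuclideanSpace ℝ (Fin d)) (r : ℝ) :
    Set (EuclideanSpace ℝ (Fin d)) :=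
  {y | ∀ i, |y i - x i| < r / 2}

/-- The zooming-out operator: Z_δ(ε)A = {x : |Q(x,δ) ∩ A| > ε·δ^d}. -/
def Zoom (d : ℕ) (δ ε : ℝ) (A : Set (EuclideanSpace ℝ (Fin d))) :
    Set (EuclideanSpace ℝ (Fin d)) :=
  {x | ENNReal.ofReal (ε * δ ^ d) < volume (cube d x δ ∩ A)}

/-- Z_δ(ε)A + Q(0,(t-1)δ) ⊆ Z_{tδ}(t^{-d}ε)A for t ≥ 1. -/
theorem stmt6 (d : ℕ) (A : Set (EuclideanSpace ℝ (Fin d)))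
    (δ ε t : ℝ) (hδ : 0 < δ) (hε : 0 < ε) (ht : 1 ≤ t) :
    Zoom d δ ε A + cube d 0 ((t - 1) * δ) ⊆ Zoom d (t * δ) (ε / t ^ d) A := by
  rintro z ⟨x, hx, y, hy, rfl⟩
  have ht0 : (0:ℝ) < t := lt_of_lt_of_le one_pos ht
  have hsub : cube d x δ ⊆ cube d (x + y) (t * δ) := by
    intro w hw i
    have h1 := hw i
    have h2 := hy i
    simp only [PiLp.zero_apply, sub_zero] at h2
    have : w i - (x + y) i = (w i - x i) - y i := by
      simp [PiLp.add_apply]; ring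
    rw [this]
    calc |(w i - x i) - y i| ≤ |w i - x i| + |y i| := abs_sub _ _
      _ < δ / 2 + (t - 1) * δ / 2 := by linarith
      _ = t * δ / 2 := by ring
  have hval : ε / t ^ d * (t * δ) ^ d = ε * δ ^ d := by
    field_simp
    ring
  simp only [Zoom, Set.mem_setOf_eq] at hx ⊢
  rw [hval]
  exact lt_of_lt_of_le hx (measure_mono (Set.inter_subset_inter_left _ hsub))

end
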